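/- arXiv:1701.01988 — 3 statements merged into one kernel-verified Lean document; each statement's English description precedes it below -/
import Mathlib

section
/- Suppose a, b, c, δ are real numbers with c > 0, δ > 0 and δ + c - a - b > 0. Then ∫₀¹ t^{c-1} (1-t)^{δ-1} · ₂F₁(a, b; c; t) dt = Γ(c) Γ(δ) Γ(δ+c-a-b) / (Γ(δ+c-a) Γ(δ+c-b)). -/
open scoped Real

/-- The Pochhammer symbol `(a)_k = a(a+1)⋯(a+k-1)`. -/
noncomputable def poch (a : ℝ) (k : ℕ) : ℝ := Polynomial.eval a (ascPochhammer ℝ k)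

/-- The Gauss hypergeometric function `₂F₁(a, b; c; x)`. -/
noncomputable def hyperg (a b c x : ℝ) : ℝ :=
  ∑' k : ℕ, poch a k * poch b k / (poch c k * (Nat.factorial k)) * x ^ k


/-!
Expanding `₂F₁(a, b; c; t)` and integrating termwise against the Beta kernel,
`∫₀¹ t^(c+k-1) (1-t)^(δ-1) dt = B(c, δ) (c)_k / (c+δ)_k`, turns the integral into
`B(c, δ) ₂F₁(a, b; c+δ; 1)`. The interchange is legitimate because, by Euler's limit formula for
`1/Γ`, the coefficients of `₂F₁(a, b; e; 1)` are `O(k^(a+b-e-1))`, summable when `e - a - b > 0`.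

The value at `1` is Gauss's summation `Γ(e) Γ(e-a-b) / (Γ(e-a) Γ(e-b))`. Iterating the contiguous
relation `e (e-a-b) F(e) = (e-a)(e-b) F(e+1)` gives
`F(e) = (e-a)_n (e-b)_n / ((e)_n (e-a-b)_n) · F(e+n)`; as `n → ∞` the Pochhammer ratio tends to
the Gamma ratio (Euler's formula again) and `F(e+n) → 1` by dominated convergence.
-/

open scoped Nat Topology
open Filter Asymptotics MeasureTheory Set

lemma poch_zero (a : ℝ) : poch a 0 = 1 := by simp [poch]

lemma poch_succ (a : ℝ) (k : ℕ) : poch a (k + 1) = poch a k * (a + k) := by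
  simp [poch, ascPochhammer_succ_eval]

lemma poch_succ_left (a : ℝ) (k : ℕ) : poch a (k + 1) = a * poch (a + 1) k := by
  simp [poch, ascPochhammer_succ_left, Polynomial.eval_comp]

lemma poch_pos {a : ℝ} (ha : 0 < a) (k : ℕ) : 0 < poch a k := ascPochhammer_pos k a ha

lemma poch_eq_prod (a : ℝ) (k : ℕ) : poch a k = ∏ j ∈ Finset.range k, (a + j) := by
  induction k with
  | zero => simp [poch_zero]
  | succ k ih => rw [poch_succ, ih, Finset.prod_range_succ]

lemma poch_le_poch {x y : ℝ} (hx : 0 < x) (hxy : x ≤ y) (k : ℕ) : poch x k ≤ poch y k := by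
  induction k with
  | zero => simp [poch_zero]
  | succ k ih =>
    rw [poch_succ, poch_succ]
    exact mul_le_mul ih (by linarith) (by positivity) (poch_pos (hx.trans_le hxy) k).le

lemma tendsto_poch_atTop {k : ℕ} (hk : k ≠ 0) : Tendsto (poch · k) atTop atTop := by
  refine Polynomial.tendsto_atTop_of_leadingCoeff_nonneg _ ?_ ?_
  · rw [Polynomial.degree_eq_natDegree (monic_ascPochhammer ℝ k).ne_zero, ascPochhammer_natDegree]
    exact_mod_cast Nat.pos_of_ne_zero hk
  · rw [(monic_ascPochhammer ℝ k).leadingCoeff]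
    exact zero_le_one

lemma Real.Gamma_add_nat_eq_poch_mul {x : ℝ} (hx : 0 < x) (k : ℕ) :
    Real.Gamma (x + k) = poch x k * Real.Gamma x := by
  induction k with
  | zero => simp [poch_zero]
  | succ k ih =>
    rw [Nat.cast_succ, ← add_assoc, Real.Gamma_add_one (by positivity), ih, poch_succ]
    ring

lemma Real.tendsto_inv_GammaSeq (x : ℝ) :
    Tendsto (fun n ↦ (Real.GammaSeq x n)⁻¹) atTop (𝓝 (Real.Gamma x)⁻¹) := by
  by_cases hx : ∀ m : ℕ, x ≠ -m
  · exact (Real.GammaSeq_tendsto_Gamma x).inv₀ (Real.Gamma_ne_zero hx)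
  · push Not at hx
    obtain ⟨m, rfl⟩ := hx
    rw [Real.Gamma_neg_nat_eq_zero, inv_zero]
    refine tendsto_const_nhds.congr' ?_
    filter_upwards [eventually_ge_atTop m] with n hn
    rw [Real.GammaSeq, Finset.prod_eq_zero (Finset.mem_range.2 (Nat.lt_succ_of_le hn)) (by simp),
      div_zero, inv_zero]

/-- Normalised so that `pochScaled x n → 1 / Γ(x)` (Euler's limit formula). -/
noncomputable def pochScaled (x : ℝ) (n : ℕ) : ℝ := poch x n / (n ! * (n : ℝ) ^ (x - 1))

lemma poch_eq_pochScaled_mul (x : ℝ) {n : ℕ} (hn : n ≠ 0) :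
    poch x n = pochScaled x n * (n ! * (n : ℝ) ^ (x - 1)) := by
  have : (0 : ℝ) < n := by positivity
  rw [pochScaled, div_mul_cancel₀ _ (by positivity)]

lemma pochScaled_pos {x : ℝ} (hx : 0 < x) {n : ℕ} (hn : n ≠ 0) : 0 < pochScaled x n := by
  have : (0 : ℝ) < n := by positivity
  exact div_pos (poch_pos hx n) (by positivity)

lemma inv_GammaSeq_eq_pochScaled_mul (x : ℝ) {n : ℕ} (hn : n ≠ 0) :
    (Real.GammaSeq x n)⁻¹ = pochScaled x n * ((x + n) / n) := by
  have hn' : (0 : ℝ) < n := by positivity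
  rw [Real.GammaSeq, inv_div, ← poch_eq_prod, poch_succ, poch_eq_pochScaled_mul x hn,
    Real.rpow_sub_one hn'.ne']
  field_simp

lemma tendsto_pochScaled (x : ℝ) : Tendsto (pochScaled x) atTop (𝓝 (Real.Gamma x)⁻¹) := by
  have h := (Real.tendsto_inv_GammaSeq x).mul (tendsto_natCast_div_add_atTop x)
  rw [mul_one] at h
  refine h.congr' ?_
  filter_upwards [eventually_ne_atTop 0, eventually_gt_atTop ⌈-x⌉₊] with n hn hxn
  have hxn : x + n ≠ 0 := by
    have := Nat.lt_of_ceil_lt hxn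
    linarith
  rw [inv_GammaSeq_eq_pochScaled_mul x hn, add_comm (n : ℝ) x]
  field_simp

noncomputable def hypergCoeff (a b c : ℝ) (k : ℕ) : ℝ := poch a k * poch b k / (poch c k * k !)

lemma hyperg_eq_tsum (a b c x : ℝ) : hyperg a b c x = ∑' k, hypergCoeff a b c k * x ^ k := rfl

lemma hypergCoeff_zero (a b c : ℝ) : hypergCoeff a b c 0 = 1 := by simp [hypergCoeff, poch_zero]

lemma hypergCoeff_mul_poch_div_poch (a b : ℝ) {c : ℝ} (hc : 0 < c) (d : ℝ) (k : ℕ) :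
    hypergCoeff a b c k * (poch c k / poch d k) = hypergCoeff a b d k := by
  have := poch_pos hc k
  simp only [hypergCoeff]
  field_simp

section Asymptotics

variable {a b c : ℝ}

lemma hypergCoeff_eq_pochScaled_mul_rpow (hc : 0 < c) {n : ℕ} (hn : n ≠ 0) :
    hypergCoeff a b c n =
      pochScaled a n * pochScaled b n / pochScaled c n * (n : ℝ) ^ (a + b - c - 1) := by
  have hn' : (0 : ℝ) < n := by positivity
  have hc' := pochScaled_pos hc hn
  have hrpow : (n : ℝ) ^ (a - 1) * (n : ℝ) ^ (b - 1) =
      (n : ℝ) ^ (c - 1) * (n : ℝ) ^ (a + b - c - 1) := by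
    rw [← Real.rpow_add hn', ← Real.rpow_add hn']
    ring_nf
  rw [hypergCoeff, poch_eq_pochScaled_mul a hn, poch_eq_pochScaled_mul b hn,
    poch_eq_pochScaled_mul c hn]
  field_simp
  linear_combination (pochScaled a n * pochScaled b n) * hrpow

lemma isBigO_hypergCoeff (hc : 0 < c) :
    hypergCoeff a b c =O[atTop] fun n ↦ (n : ℝ) ^ (a + b - c - 1) := by
  have hQ := (((tendsto_pochScaled a).mul (tendsto_pochScaled b)).div (tendsto_pochScaled c)
    (inv_ne_zero (Real.Gamma_pos_of_pos hc).ne')).isBigO_one ℝ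
  refine EventuallyEq.trans_isBigO ?_ (by simpa using hQ.mul (isBigO_refl _ atTop))
  filter_upwards [eventually_ne_atTop 0] with n hn
  exact hypergCoeff_eq_pochScaled_mul_rpow hc hn

lemma summable_hypergCoeff (hc : 0 < c) (h : 0 < c - a - b) : Summable (hypergCoeff a b c) :=
  summable_of_isBigO_nat (Real.summable_nat_rpow.2 (by linarith)) (isBigO_hypergCoeff hc)

lemma tendsto_natCast_mul_hypergCoeff (hc : 0 < c) (h : 0 < c - a - b) :
    Tendsto (fun n : ℕ ↦ n * hypergCoeff a b c n) atTop (𝓝 0) := by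
  refine IsBigO.trans_tendsto ?_ ((tendsto_rpow_neg_atTop h).comp tendsto_natCast_atTop_atTop)
  refine ((isBigO_refl _ atTop).mul (isBigO_hypergCoeff hc)).congr' .rfl ?_
  filter_upwards [eventually_ne_atTop 0] with n hn
  rw [Function.comp_apply, ← Real.rpow_one_add' (by positivity) (by linarith)]
  ring_nf

end Asymptotics

lemma tendsto_poch_mul_poch_div_poch_mul_poch {x y z w : ℝ} (hz : 0 < z) (hw : 0 < w)
    (hxy : x + y = z + w) :
    Tendsto (fun n ↦ poch x n * poch y n / (poch z n * poch w n)) atTop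
      (𝓝 (Real.Gamma z * Real.Gamma w / (Real.Gamma x * Real.Gamma y))) := by
  have hΓ : (Real.Gamma z)⁻¹ * (Real.Gamma w)⁻¹ ≠ 0 := by
    have := Real.Gamma_pos_of_pos hz
    have := Real.Gamma_pos_of_pos hw
    positivity
  have hlim : Tendsto (fun n ↦ pochScaled x n * pochScaled y n / (pochScaled z n * pochScaled w n))
      atTop (𝓝 ((Real.Gamma x)⁻¹ * (Real.Gamma y)⁻¹ / ((Real.Gamma z)⁻¹ * (Real.Gamma w)⁻¹))) :=
    ((tendsto_pochScaled x).mul (tendsto_pochScaled y)).div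
      ((tendsto_pochScaled z).mul (tendsto_pochScaled w)) hΓ
  rw [← mul_inv, ← mul_inv, inv_div_inv] at hlim
  refine hlim.congr' ?_
  filter_upwards [eventually_ne_atTop 0] with n hn
  have hn' : (0 : ℝ) < n := by positivity
  have hrpow : (n : ℝ) ^ (x - 1) * (n : ℝ) ^ (y - 1) = (n : ℝ) ^ (z - 1) * (n : ℝ) ^ (w - 1) := by
    rw [← Real.rpow_add hn', ← Real.rpow_add hn',
      show x - 1 + (y - 1) = z - 1 + (w - 1) by linarith]
  have hz' := pochScaled_pos hz hn
  have hw' := pochScaled_pos hw hn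
  rw [poch_eq_pochScaled_mul x hn, poch_eq_pochScaled_mul y hn, poch_eq_pochScaled_mul z hn,
    poch_eq_pochScaled_mul w hn]
  field_simp
  linear_combination (-(pochScaled x n * pochScaled y n)) * hrpow

section GaussSummation

variable {a b e : ℝ}

lemma hypergCoeff_contiguous (he : 0 < e) (k : ℕ) :
    e * (e - a - b) * hypergCoeff a b e k - (e - a) * (e - b) * hypergCoeff a b (e + 1) k =
      e * k * hypergCoeff a b e k - e * (k + 1 : ℕ) * hypergCoeff a b e (k + 1) := by
  have hpe := poch_pos he k
  have hpe1 := poch_pos (by linarith : 0 < e + 1) k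
  have hek : 0 < e + k := by positivity
  have hpoch_e1 : poch (e + 1) k = poch e k * (e + k) / e := by
    rw [← poch_succ, poch_succ_left]
    field_simp
  simp only [hypergCoeff]
  rw [hpoch_e1, poch_succ a, poch_succ b, poch_succ e, Nat.factorial_succ]
  push_cast
  field_simp
  ring

/-- The difference of the two series telescopes: its partial sums are `-e K c_K → 0`. -/
lemma tsum_hypergCoeff_contiguous (he : 0 < e) (h : 0 < e - a - b) :
    e * (e - a - b) * ∑' k, hypergCoeff a b e k =
      (e - a) * (e - b) * ∑' k, hypergCoeff a b (e + 1) k := by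
  have hsum := ((summable_hypergCoeff he h).hasSum.mul_left (e * (e - a - b))).sub
    ((summable_hypergCoeff (a := a) (b := b) (c := e + 1) (by linarith)
      (by linarith)).hasSum.mul_left ((e - a) * (e - b)))
  have htel : Tendsto (fun K ↦ ∑ k ∈ Finset.range K, (e * (e - a - b) * hypergCoeff a b e k -
      (e - a) * (e - b) * hypergCoeff a b (e + 1) k)) atTop (𝓝 0) := by
    simp_rw [hypergCoeff_contiguous he, Finset.sum_range_sub', Nat.cast_zero, mul_zero,
      zero_mul, zero_sub, mul_assoc]
    simpa using ((tendsto_natCast_mul_hypergCoeff he h).const_mul e).neg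
  linarith [tendsto_nhds_unique hsum.tendsto_sum_nat htel]

lemma tsum_hypergCoeff_contiguous_iterate (he : 0 < e) (h : 0 < e - a - b) (n : ℕ) :
    poch e n * poch (e - a - b) n * ∑' k, hypergCoeff a b e k =
      poch (e - a) n * poch (e - b) n * ∑' k, hypergCoeff a b (e + n) k := by
  induction n with
  | zero => simp [poch_zero]
  | succ n ih =>
    have hcont := tsum_hypergCoeff_contiguous (a := a) (b := b) (e := e + n) (by positivity)
      (by linarith [(Nat.cast_nonneg n : (0 : ℝ) ≤ n)])
    rw [poch_succ, poch_succ, poch_succ, poch_succ, Nat.cast_succ, ← add_assoc]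
    linear_combination ((e + n) * (e + n - a - b)) * ih + (poch (e - a) n * poch (e - b) n) * hcont

lemma tendsto_tsum_hypergCoeff_add_nat (he : 0 < e) (h : 0 < e - a - b) :
    Tendsto (fun n : ℕ ↦ ∑' k, hypergCoeff a b (e + n) k) atTop (𝓝 1) := by
  have hlim : ∀ k, Tendsto (fun n : ℕ ↦ hypergCoeff a b (e + n) k) atTop
      (𝓝 (if k = 0 then 1 else 0)) := by
    intro k
    split_ifs with hk
    · simp [hk, hypergCoeff_zero]
    · have hpoch := (tendsto_poch_atTop hk).comp
        (tendsto_atTop_add_const_left atTop e tendsto_natCast_atTop_atTop)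
      simpa [hypergCoeff, mul_inv, ← mul_assoc, div_eq_mul_inv] using
        hpoch.inv_tendsto_atTop.const_mul (poch a k * poch b k * (k ! : ℝ)⁻¹)
  have hbound : ∀ n : ℕ, ∀ k, ‖hypergCoeff a b (e + n) k‖ ≤ |hypergCoeff a b e k| := by
    intro n k
    simp only [hypergCoeff, Real.norm_eq_abs, abs_div, abs_mul, Nat.abs_cast,
      abs_of_pos (poch_pos he k), abs_of_pos (poch_pos (by positivity : 0 < e + n) k)]
    gcongr
    · exact mul_pos (poch_pos he k) (by positivity)
    · exact poch_le_poch he (le_add_of_nonneg_right n.cast_nonneg) k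
  simpa using tendsto_tsum_of_dominated_convergence (summable_hypergCoeff he h).abs hlim
    (.of_forall hbound)

theorem tsum_hypergCoeff_eq_Gamma (he : 0 < e) (h : 0 < e - a - b) :
    ∑' k, hypergCoeff a b e k =
      Real.Gamma e * Real.Gamma (e - a - b) / (Real.Gamma (e - a) * Real.Gamma (e - b)) := by
  have hstep : ∀ n : ℕ, ∑' k, hypergCoeff a b e k =
      poch (e - a) n * poch (e - b) n / (poch e n * poch (e - a - b) n) *
        ∑' k, hypergCoeff a b (e + n) k := by
    intro n
    have := poch_pos he n
    have := poch_pos h n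
    rw [div_mul_eq_mul_div, eq_div_iff (by positivity), mul_comm,
      tsum_hypergCoeff_contiguous_iterate he h]
  have hlim := (tendsto_poch_mul_poch_div_poch_mul_poch (x := e - a) (y := e - b) he h
    (by ring)).mul (tendsto_tsum_hypergCoeff_add_nat he h)
  rw [mul_one] at hlim
  exact tendsto_nhds_unique (tendsto_const_nhds.congr hstep) hlim

end GaussSummation

lemma ofReal_rpow_mul_one_sub_rpow (u v : ℝ) {x : ℝ} (hx : x ∈ Icc (0 : ℝ) 1) :
    ((x ^ (u - 1) * (1 - x) ^ (v - 1) : ℝ) : ℂ) =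
      (x : ℂ) ^ ((u : ℂ) - 1) * (1 - (x : ℂ)) ^ ((v : ℂ) - 1) := by
  rw [Complex.ofReal_mul, Complex.ofReal_cpow hx.1, Complex.ofReal_cpow (sub_nonneg.2 hx.2)]
  push_cast
  rfl

section BetaIntegral

variable {u v : ℝ}

lemma integrableOn_rpow_mul_one_sub_rpow (hu : 0 < u) (hv : 0 < v) :
    IntegrableOn (fun t ↦ t ^ (u - 1) * (1 - t) ^ (v - 1)) (Ioo (0 : ℝ) 1) := by
  have hβ := Complex.betaIntegral_convergent (u := u) (v := v) (by simpa) (by simpa)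
  rw [intervalIntegrable_iff_integrableOn_Ioc_of_le zero_le_one] at hβ
  refine IntegrableOn.congr_fun (hβ.mono_set Ioo_subset_Ioc_self).re (fun x hx ↦ ?_)
    measurableSet_Ioo
  rw [← ofReal_rpow_mul_one_sub_rpow u v (Ioo_subset_Icc_self hx), RCLike.re_to_complex,
    Complex.ofReal_re]

lemma integral_rpow_mul_one_sub_rpow (hu : 0 < u) (hv : 0 < v) :
    ∫ t in Ioo (0 : ℝ) 1, t ^ (u - 1) * (1 - t) ^ (v - 1) =
      Real.Gamma u * Real.Gamma v / Real.Gamma (u + v) := by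
  have hβ := Complex.betaIntegral_eq_Gamma_mul_div u v (by simpa) (by simpa)
  rw [Complex.betaIntegral, intervalIntegral.integral_of_le zero_le_one,
    integral_Ioc_eq_integral_Ioo,
    ← setIntegral_congr_fun measurableSet_Ioo
      (fun x hx ↦ ofReal_rpow_mul_one_sub_rpow u v (Ioo_subset_Icc_self hx)),
    integral_complex_ofReal, ← Complex.ofReal_add] at hβ
  simp only [Complex.Gamma_ofReal] at hβ
  exact_mod_cast hβ

lemma integral_rpow_add_nat_mul_one_sub_rpow (hu : 0 < u) (hv : 0 < v) (k : ℕ) :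
    ∫ t in Ioo (0 : ℝ) 1, t ^ (u + k - 1) * (1 - t) ^ (v - 1) =
      poch u k / poch (u + v) k * (Real.Gamma u * Real.Gamma v / Real.Gamma (u + v)) := by
  have := poch_pos (add_pos hu hv) k
  have := Real.Gamma_pos_of_pos (add_pos hu hv)
  rw [integral_rpow_mul_one_sub_rpow (by positivity) hv, add_right_comm,
    Real.Gamma_add_nat_eq_poch_mul hu, Real.Gamma_add_nat_eq_poch_mul (add_pos hu hv)]
  field_simp

end BetaIntegral

lemma rpow_mul_one_sub_rpow_mul_tsum {t : ℝ} (ht : 0 < t) (c δ : ℝ) (f : ℕ → ℝ) :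
    t ^ (c - 1) * (1 - t) ^ (δ - 1) * ∑' k, f k * t ^ k =
      ∑' k, f k * (t ^ (c + k - 1) * (1 - t) ^ (δ - 1)) := by
  rw [← tsum_mul_left]
  refine tsum_congr fun k ↦ ?_
  rw [add_sub_right_comm, Real.rpow_add_natCast ht.ne']
  ring

lemma integral_rpow_mul_one_sub_rpow_mul_hyperg {a b c δ : ℝ} (hc : 0 < c) (hδ : 0 < δ)
    (h : 0 < δ + c - a - b) :
    ∫ t in Ioo (0 : ℝ) 1, t ^ (c - 1) * (1 - t) ^ (δ - 1) * hyperg a b c t =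
      Real.Gamma c * Real.Gamma δ / Real.Gamma (c + δ) * ∑' k, hypergCoeff a b (c + δ) k := by
  set B := Real.Gamma c * Real.Gamma δ / Real.Gamma (c + δ)
  set F : ℕ → ℝ → ℝ := fun k t ↦ hypergCoeff a b c k * (t ^ (c + k - 1) * (1 - t) ^ (δ - 1))
  have hratio (k : ℕ) : 0 < poch c k / poch (c + δ) k :=
    div_pos (poch_pos hc k) (poch_pos (by linarith) k)
  have hF_int (k : ℕ) : IntegrableOn (F k) (Ioo 0 1) :=
    (integrableOn_rpow_mul_one_sub_rpow (by positivity) hδ).const_mul _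
  have hF_integral (k : ℕ) : ∫ t in Ioo 0 1, F k t = hypergCoeff a b (c + δ) k * B := by
    rw [integral_const_mul, integral_rpow_add_nat_mul_one_sub_rpow hc hδ, ← mul_assoc,
      hypergCoeff_mul_poch_div_poch a b hc]
  have hF_norm (k : ℕ) : ∫ t in Ioo 0 1, ‖F k t‖ = |hypergCoeff a b (c + δ) k| * B := by
    have hnorm : EqOn (fun t ↦ ‖F k t‖)
        (fun t ↦ |hypergCoeff a b c k| * (t ^ (c + k - 1) * (1 - t) ^ (δ - 1))) (Ioo 0 1) :=
      fun t ht ↦ by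
        simp only [F, Real.norm_eq_abs, abs_mul, abs_of_nonneg (Real.rpow_nonneg ht.1.le _),
          abs_of_nonneg (Real.rpow_nonneg (sub_nonneg.2 ht.2.le) _)]
    rw [setIntegral_congr_fun measurableSet_Ioo hnorm, integral_const_mul,
      integral_rpow_add_nat_mul_one_sub_rpow hc hδ, ← mul_assoc, ← abs_of_pos (hratio k),
      ← abs_mul, hypergCoeff_mul_poch_div_poch a b hc]
  have hsum : Summable fun k ↦ ∫ t in Ioo 0 1, ‖F k t‖ := by
    simp_rw [hF_norm]
    exact ((summable_hypergCoeff (by linarith) (by linarith)).abs.mul_right B)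
  simp_rw [hyperg_eq_tsum]
  rw [setIntegral_congr_fun measurableSet_Ioo
      (fun t ht ↦ rpow_mul_one_sub_rpow_mul_tsum ht.1 c δ (hypergCoeff a b c)),
    ← integral_tsum_of_summable_integral_norm hF_int hsum]
  simp_rw [hF_integral]
  rw [tsum_mul_right, mul_comm]

theorem hyperg_integral_identity (a b c δ : ℝ) (hc : 0 < c) (hδ : 0 < δ)
    (h : 0 < δ + c - a - b) :
    ∫ t in Set.Ioo (0 : ℝ) 1, t ^ (c - 1) * (1 - t) ^ (δ - 1) * hyperg a b c t =
      Real.Gamma c * Real.Gamma δ * Real.Gamma (δ + c - a - b) /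
        (Real.Gamma (δ + c - a) * Real.Gamma (δ + c - b)) := by
  have hcδ : 0 < c + δ := by linarith
  rw [integral_rpow_mul_one_sub_rpow_mul_hyperg hc hδ h,
    tsum_hypergCoeff_eq_Gamma hcδ (by linarith), add_comm c δ]
  have := Real.Gamma_pos_of_pos hcδ
  field_simp
end

section
/- (L'Hôpital Monotone Rule.) Let -∞ < a < b < ∞ and let φ, ψ : [a, b] → ℝ be continuous functions that are differentiable on (a, b), with either φ(a) = ψ(a) = 0 or φ(b) = ψ(b) = 0. Assume that ψ'(x) ≠ 0 for each x in (a, b). If φ'/ψ' is increasing on (a, b), then φ/ψ is increasing on (a, b); if φ'/ψ' is decreasing on (a, b), then φ/ψ is decreasing on (a, b). -/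
open Set

/-- Key step: if `ψ ≠ 0` on `(a,b)` and the numerator of the derivative of `φ/ψ` is
nonnegative there, then `φ/ψ` is monotone on `(a,b)`. -/
private lemma lhmr_key (a b : ℝ) (φ ψ φ' ψ' : ℝ → ℝ)
    (hφd : ∀ x ∈ Set.Ioo a b, HasDerivAt φ (φ' x) x)
    (hψd : ∀ x ∈ Set.Ioo a b, HasDerivAt ψ (ψ' x) x)
    (hne : ∀ x ∈ Set.Ioo a b, ψ x ≠ 0)
    (hkey : ∀ x ∈ Set.Ioo a b, 0 ≤ φ' x * ψ x - φ x * ψ' x) :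
    MonotoneOn (fun x => φ x / ψ x) (Set.Ioo a b) := by
  have hd : ∀ x ∈ Set.Ioo a b,
      HasDerivAt (fun y => φ y / ψ y) ((φ' x * ψ x - φ x * ψ' x) / ψ x ^ 2) x := by
    intro x hx
    exact (hφd x hx).div (hψd x hx) (hne x hx)
  have hdiff : DifferentiableOn ℝ (fun y => φ y / ψ y) (Set.Ioo a b) :=
    fun x hx => ((hd x hx).differentiableAt).differentiableWithinAt
  apply monotoneOn_of_deriv_nonneg (convex_Ioo a b) hdiff.continuousOn
  · rw [interior_Ioo]; exact hdiff
  · intro x hx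
    rw [interior_Ioo] at hx
    rw [(hd x hx).deriv]
    exact div_nonneg (hkey x hx) (sq_nonneg _)

/-- Monotone case with vanishing at the left endpoint. -/
private lemma lhmr_left (a b : ℝ) (hab : a < b) (φ ψ φ' ψ' : ℝ → ℝ)
    (hφc : ContinuousOn φ (Set.Icc a b)) (hψc : ContinuousOn ψ (Set.Icc a b))
    (hφd : ∀ x ∈ Set.Ioo a b, HasDerivAt φ (φ' x) x)
    (hψd : ∀ x ∈ Set.Ioo a b, HasDerivAt ψ (ψ' x) x)
    (hφa : φ a = 0) (hψa : ψ a = 0)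
    (hψ' : ∀ x ∈ Set.Ioo a b, ψ' x ≠ 0)
    (hmono : MonotoneOn (fun x => φ' x / ψ' x) (Set.Ioo a b)) :
    MonotoneOn (fun x => φ x / ψ x) (Set.Ioo a b) := by
  -- Darboux: ψ' has constant sign
  have hsign : (∀ x ∈ Set.Ioo a b, ψ' x < 0) ∨ (∀ x ∈ Set.Ioo a b, 0 < ψ' x) :=
    hasDerivWithinAt_forall_lt_or_forall_gt_of_forall_ne (convex_Ioo a b)
      (fun x hx => (hψd x hx).hasDerivWithinAt) hψ'
  -- ψ x * ψ' x > 0 on (a,b)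
  have hψψ' : ∀ x ∈ Set.Ioo a b, 0 < ψ x * ψ' x := by
    intro x hx
    obtain ⟨c, hc, hceq⟩ := exists_hasDerivAt_eq_slope ψ ψ' hx.1
      (hψc.mono (Set.Icc_subset_Icc le_rfl hx.2.le))
      (fun y hy => hψd y ⟨hy.1, hy.2.trans hx.2⟩)
    have hcmem : c ∈ Set.Ioo a b := ⟨hc.1, hc.2.trans hx.2⟩
    have hxa : 0 < x - a := by linarith [hx.1]
    have hψx : ψ x = ψ' c * (x - a) := by
      rw [hψa] at hceq
      field_simp at hceq
      linarith
    rcases hsign with h | h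
    · have h1 := h c hcmem
      have h2 := h x hx
      have : ψ x < 0 := by rw [hψx]; exact mul_neg_of_neg_of_pos h1 hxa
      exact mul_pos_of_neg_of_neg this h2
    · have h1 := h c hcmem
      have h2 := h x hx
      have : 0 < ψ x := by rw [hψx]; exact mul_pos h1 hxa
      exact mul_pos this h2
  have hne : ∀ x ∈ Set.Ioo a b, ψ x ≠ 0 := by
    intro x hx h
    have := hψψ' x hx
    rw [h, zero_mul] at this
    exact lt_irrefl 0 this
  -- ratio inequality via Cauchy MVT on [a, x]
  have hratio : ∀ x ∈ Set.Ioo a b, φ x / ψ x ≤ φ' x / ψ' x := by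
    intro x hx
    obtain ⟨c, hc, hceq⟩ := exists_ratio_hasDerivAt_eq_ratio_slope φ φ' hx.1
      (hφc.mono (Set.Icc_subset_Icc le_rfl hx.2.le))
      (fun y hy => hφd y ⟨hy.1, hy.2.trans hx.2⟩) ψ ψ'
      (hψc.mono (Set.Icc_subset_Icc le_rfl hx.2.le))
      (fun y hy => hψd y ⟨hy.1, hy.2.trans hx.2⟩)
    have hcmem : c ∈ Set.Ioo a b := ⟨hc.1, hc.2.trans hx.2⟩
    rw [hφa, hψa, sub_zero, sub_zero] at hceq
    have heq : φ x / ψ x = φ' c / ψ' c :=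
      (div_eq_div_iff (hne x hx) (hψ' c hcmem)).mpr (by linarith)
    rw [heq]
    exact hmono hcmem hx hc.2.le
  apply lhmr_key a b φ ψ φ' ψ' hφd hψd hne
  intro x hx
  have h1 := hψψ' x hx
  have h2 := hratio x hx
  have h3 : (ψ x * ψ' x) * (φ' x / ψ' x - φ x / ψ x) = φ' x * ψ x - φ x * ψ' x := by
    field_simp [hne x hx, hψ' x hx]
  rw [← h3]
  exact mul_nonneg h1.le (sub_nonneg.2 h2)

/-- Monotone case with vanishing at the right endpoint. -/
private lemma lhmr_right (a b : ℝ) (hab : a < b) (φ ψ φ' ψ' : ℝ → ℝ)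
    (hφc : ContinuousOn φ (Set.Icc a b)) (hψc : ContinuousOn ψ (Set.Icc a b))
    (hφd : ∀ x ∈ Set.Ioo a b, HasDerivAt φ (φ' x) x)
    (hψd : ∀ x ∈ Set.Ioo a b, HasDerivAt ψ (ψ' x) x)
    (hφb : φ b = 0) (hψb : ψ b = 0)
    (hψ' : ∀ x ∈ Set.Ioo a b, ψ' x ≠ 0)
    (hmono : MonotoneOn (fun x => φ' x / ψ' x) (Set.Ioo a b)) :
    MonotoneOn (fun x => φ x / ψ x) (Set.Ioo a b) := by
  have hsign : (∀ x ∈ Set.Ioo a b, ψ' x < 0) ∨ (∀ x ∈ Set.Ioo a b, 0 < ψ' x) :=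
    hasDerivWithinAt_forall_lt_or_forall_gt_of_forall_ne (convex_Ioo a b)
      (fun x hx => (hψd x hx).hasDerivWithinAt) hψ'
  -- ψ x * ψ' x < 0 on (a,b)
  have hψψ' : ∀ x ∈ Set.Ioo a b, ψ x * ψ' x < 0 := by
    intro x hx
    obtain ⟨c, hc, hceq⟩ := exists_hasDerivAt_eq_slope ψ ψ' hx.2
      (hψc.mono (Set.Icc_subset_Icc hx.1.le le_rfl))
      (fun y hy => hψd y ⟨hx.1.trans hy.1, hy.2⟩)
    have hcmem : c ∈ Set.Ioo a b := ⟨hx.1.trans hc.1, hc.2⟩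
    have hxb : 0 < b - x := by linarith [hx.2]
    have hψx : ψ x = -(ψ' c * (b - x)) := by
      rw [hψb] at hceq
      field_simp at hceq
      linarith
    rcases hsign with h | h
    · have h1 := h c hcmem
      have h2 := h x hx
      have : 0 < ψ x := by rw [hψx]; nlinarith
      exact mul_neg_of_pos_of_neg this h2
    · have h1 := h c hcmem
      have h2 := h x hx
      have : ψ x < 0 := by rw [hψx]; nlinarith
      exact mul_neg_of_neg_of_pos this h2
  have hne : ∀ x ∈ Set.Ioo a b, ψ x ≠ 0 := by
    intro x hx h
    have := hψψ' x hx
    rw [h, zero_mul] at this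
    exact lt_irrefl 0 this
  -- ratio inequality via Cauchy MVT on [x, b]
  have hratio : ∀ x ∈ Set.Ioo a b, φ' x / ψ' x ≤ φ x / ψ x := by
    intro x hx
    obtain ⟨c, hc, hceq⟩ := exists_ratio_hasDerivAt_eq_ratio_slope φ φ' hx.2
      (hφc.mono (Set.Icc_subset_Icc hx.1.le le_rfl))
      (fun y hy => hφd y ⟨hx.1.trans hy.1, hy.2⟩) ψ ψ'
      (hψc.mono (Set.Icc_subset_Icc hx.1.le le_rfl))
      (fun y hy => hψd y ⟨hx.1.trans hy.1, hy.2⟩)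
    have hcmem : c ∈ Set.Ioo a b := ⟨hx.1.trans hc.1, hc.2⟩
    rw [hφb, hψb, zero_sub, zero_sub] at hceq
    have heq : φ x / ψ x = φ' c / ψ' c :=
      (div_eq_div_iff (hne x hx) (hψ' c hcmem)).mpr (by linarith)
    rw [heq]
    exact hmono hx hcmem hc.1.le
  apply lhmr_key a b φ ψ φ' ψ' hφd hψd hne
  intro x hx
  have h1 := hψψ' x hx
  have h2 := hratio x hx
  have h3 : (ψ x * ψ' x) * (φ' x / ψ' x - φ x / ψ x) = φ' x * ψ x - φ x * ψ' x := by
    field_simp [hne x hx, hψ' x hx]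
  rw [← h3]
  nlinarith [mul_nonneg (neg_nonneg.2 h1.le) (neg_nonneg.2 (sub_nonpos.2 h2))]

/-- L'Hôpital Monotone Rule: if `φ, ψ` are continuous on `[a,b]`, differentiable on `(a,b)`,
vanish together at one endpoint, `ψ'` never vanishes on `(a,b)`, and `φ'/ψ'` is
increasing (resp. decreasing) on `(a,b)`, then so is `φ/ψ`. -/
theorem lhopital_monotone_rule (a b : ℝ) (hab : a < b) (φ ψ φ' ψ' : ℝ → ℝ)
    (hφc : ContinuousOn φ (Set.Icc a b)) (hψc : ContinuousOn ψ (Set.Icc a b))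
    (hφd : ∀ x ∈ Set.Ioo a b, HasDerivAt φ (φ' x) x)
    (hψd : ∀ x ∈ Set.Ioo a b, HasDerivAt ψ (ψ' x) x)
    (hzero : (φ a = 0 ∧ ψ a = 0) ∨ (φ b = 0 ∧ ψ b = 0))
    (hψ' : ∀ x ∈ Set.Ioo a b, ψ' x ≠ 0) :
    (MonotoneOn (fun x => φ' x / ψ' x) (Set.Ioo a b) →
      MonotoneOn (fun x => φ x / ψ x) (Set.Ioo a b)) ∧
    (AntitoneOn (fun x => φ' x / ψ' x) (Set.Ioo a b) →
      AntitoneOn (fun x => φ x / ψ x) (Set.Ioo a b)) := by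
  have mono_case : ∀ (f f' : ℝ → ℝ), ContinuousOn f (Set.Icc a b) →
      (∀ x ∈ Set.Ioo a b, HasDerivAt f (f' x) x) →
      ((f a = 0 ∧ ψ a = 0) ∨ (f b = 0 ∧ ψ b = 0)) →
      MonotoneOn (fun x => f' x / ψ' x) (Set.Ioo a b) →
      MonotoneOn (fun x => f x / ψ x) (Set.Ioo a b) := by
    intro f f' hfc hfd hz hm
    rcases hz with ⟨h1, h2⟩ | ⟨h1, h2⟩
    · exact lhmr_left a b hab f ψ f' ψ' hfc hψc hfd hψd h1 h2 hψ' hm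
    · exact lhmr_right a b hab f ψ f' ψ' hfc hψc hfd hψd h1 h2 hψ' hm
  constructor
  · exact mono_case φ φ' hφc hφd hzero
  · intro hanti
    have key : MonotoneOn (fun x => (fun y => -φ y) x / ψ x) (Set.Ioo a b) := by
      apply mono_case (fun y => -φ y) (fun y => -φ' y) hφc.neg
        (fun x hx => (hφd x hx).neg)
      · rcases hzero with ⟨h1, h2⟩ | ⟨h1, h2⟩
        · exact Or.inl ⟨by rw [h1, neg_zero], h2⟩
        · exact Or.inr ⟨by rw [h1, neg_zero], h2⟩
      · intro x hx y hy hxy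
        simp only [neg_div]
        exact neg_le_neg (hanti hx hy hxy)
    intro x hx y hy hxy
    have := key hx hy hxy
    simp only [neg_div] at this
    linarith
end

section
/- Let p > 2, q = p/(p-1), α > -1, and set β = (2+α)/2. For k = 0, 1, 2, … define ε_k = ((2β/p)_k / k!) · ( Γ(k+2β) Γ(k+β) / (Γ(k+β+2β/q) Γ(k+2β/p)) − 1 ). Then there exists a constant C > 0 such that |ε_k| ≤ C (k+1)^{2β − 2β/q − 2} for all k ≥ 0. -/
/-- The coefficients
`ε_k = ((2β/p)_k / k!)(Γ(k+2β)Γ(k+β)/(Γ(k+β+2β/q)Γ(k+2β/p)) − 1)`. -/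
noncomputable def epsK (p q β : ℝ) (k : ℕ) : ℝ :=
  poch (2 * β / p) k / (Nat.factorial k) *
    (Real.Gamma (k + 2 * β) * Real.Gamma (k + β) /
      (Real.Gamma (k + β + 2 * β / q) * Real.Gamma (k + 2 * β / p)) - 1)

/-
With `a = 2β/p`, `b = 2β/q = 2β - a`, `c = β - a > 0` and `z = k + a` one has
`ε_k = Γ(z) / (Γ(a) k!) · (R(z) - 1)` with `R(z) = Γ(z+b)Γ(z+c) / (Γ(z)Γ(z+b+c))`.
Since `log Γ` is convex and `log Γ(x+1) - log Γ(x) = log x`, its secant slope over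
`[x, x+s]` lies between `log (x-1)` and `log (x+s)`. This gives the Gautschi-type bound
`Γ(k+a)/k! = O((k+1)^(a-1))`, and bounds the second difference `-log R(z)` of `log Γ` by
`0 ≤ -log R(z) ≤ c(b+c+1)/z`. Multiplying, `|ε_k| = O((k+1)^(a-2))`.
-/

open Real Set
open scoped Nat

theorem ConvexOn.map_add_sub_map_le {𝕜 : Type*} [Field 𝕜] [LinearOrder 𝕜] [IsStrictOrderedRing 𝕜]
    {s : Set 𝕜} {f : 𝕜 → 𝕜} (hf : ConvexOn 𝕜 s f) {x y d : 𝕜} (hx : x ∈ s) (hy : y ∈ s)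
    (hxd : x + d ∈ s) (hyd : y + d ∈ s) (hxy : x ≤ y) (hd : 0 < d) :
    f (x + d) - f x ≤ f (y + d) - f y := by
  have h₁ := hf.secant_mono hx hxd hyd (by simpa using hd.ne') (by simp; linarith)
    (by simpa using hxy)
  have h₂ := hf.secant_mono hyd hx hy (by simp; linarith) (by simpa using hd.ne') hxy
  rw [← neg_div_neg_eq (f x - _), neg_sub, neg_sub] at h₂
  have := h₁.trans h₂
  rwa [add_sub_cancel_left, sub_add_cancel_left, div_neg, ← neg_div, neg_sub,
    div_le_div_iff_of_pos_right hd] at this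

theorem min_one_mul_add_one_le {a x : ℝ} (hx : 0 ≤ x) :
    min a 1 * (x + 1) ≤ x + a := by
  have := min_le_left a 1
  have := min_le_right a 1
  nlinarith

namespace Real

theorem log_Gamma_add_one {x : ℝ} (hx : 0 < x) :
    log (Gamma (x + 1)) = log (Gamma x) + log x := by
  rw [Gamma_add_one hx.ne', log_mul hx.ne' (Gamma_pos_of_pos hx).ne', add_comm]

theorem log_Gamma_add_sub_le {x s : ℝ} (hx : 0 < x) (hs : 0 < s) :
    log (Gamma (x + s)) - log (Gamma x) ≤ s * log (x + s) := by
  have h := convexOn_log_Gamma.slope_mono_adjacent (x := x) (y := x + s) (z := x + s + 1)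
    hx (mem_Ioi.2 (by linarith)) (by linarith) (by linarith)
  simp only [Function.comp_apply] at h
  rwa [log_Gamma_add_one (by linarith), add_sub_cancel_left, add_sub_cancel_left,
    add_sub_cancel_left, div_one, div_le_iff₀ hs, mul_comm] at h

theorem mul_log_le_log_Gamma_add_sub {x s : ℝ} (hx : 0 < x) (hs : 0 < s) :
    s * log x ≤ log (Gamma (x + 1 + s)) - log (Gamma (x + 1)) := by
  have h := convexOn_log_Gamma.slope_mono_adjacent (x := x) (y := x + 1) (z := x + 1 + s)
    hx (mem_Ioi.2 (by linarith)) (by linarith) (by linarith)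
  simp only [Function.comp_apply] at h
  rw [log_Gamma_add_one hx, add_sub_cancel_left, add_sub_cancel_left x 1,
    add_sub_cancel_left (x + 1), div_one, le_div_iff₀ hs, mul_comm] at h
  rwa [log_Gamma_add_one hx]

theorem Gamma_add_le_mul_rpow {x s : ℝ} (hx : 0 < x) (hs : 0 < s) :
    Gamma (x + s) ≤ Gamma x * (x + s) ^ s := by
  have h := log_Gamma_add_sub_le hx hs
  rwa [sub_le_iff_le_add, ← log_rpow (by linarith), ← log_mul (by positivity)
    (Gamma_pos_of_pos hx).ne', log_le_log_iff (Gamma_pos_of_pos (by linarith)) (by positivity),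
    mul_comm] at h

theorem Gamma_nat_add_div_factorial_le {a : ℝ} (ha : 0 < a) (k : ℕ) :
    Gamma (k + a) / k ! ≤ (1 + a) ^ a / min a 1 * ((k : ℝ) + 1) ^ (a - 1) := by
  have hk : (0 : ℝ) < k + 1 := by positivity
  have hka : (0 : ℝ) < k + a := by positivity
  have hfeq : Gamma (k + a) * (k + a) ≤ k ! * (k + 1 + a) ^ a := by
    rw [mul_comm, ← Gamma_add_one hka.ne', ← Gamma_nat_eq_factorial, add_right_comm]
    exact Gamma_add_le_mul_rpow hk ha
  have hpow : ((k : ℝ) + 1 + a) ^ a ≤ (1 + a) ^ a * (k + 1) ^ a := by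
    rw [← mul_rpow (by positivity) hk.le]
    exact rpow_le_rpow (by positivity) (by nlinarith) ha.le
  calc Gamma (k + a) / k ! ≤ (k + 1 + a) ^ a / (k + a) := by
        rw [div_le_div_iff₀ (by positivity) hka]
        linarith
    _ ≤ (1 + a) ^ a * (k + 1) ^ a / (min a 1 * (k + 1)) :=
        div_le_div₀ (by positivity) hpow (by positivity)
          (min_one_mul_add_one_le k.cast_nonneg)
    _ = (1 + a) ^ a / min a 1 * ((k : ℝ) + 1) ^ (a - 1) := by
        rw [rpow_sub_one hk.ne', mul_div_mul_comm]

end Real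

noncomputable def gammaRatio (b c z : ℝ) : ℝ :=
  Gamma (z + b) * Gamma (z + c) / (Gamma z * Gamma (z + b + c))

section gammaRatio

variable {b c z : ℝ}

theorem gammaRatio_pos (hz : 0 < z) (hb : 0 ≤ b) (hc : 0 ≤ c) : 0 < gammaRatio b c z := by
  unfold gammaRatio
  have := Gamma_pos_of_pos hz
  have := Gamma_pos_of_pos (by linarith : 0 < z + b)
  have := Gamma_pos_of_pos (by linarith : 0 < z + c)
  have := Gamma_pos_of_pos (by linarith : 0 < z + b + c)
  positivity

theorem log_gammaRatio (hz : 0 < z) (hb : 0 ≤ b) (hc : 0 ≤ c) :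
    log (gammaRatio b c z) = (log (Gamma (z + c)) - log (Gamma z)) -
      (log (Gamma (z + b + c)) - log (Gamma (z + b))) := by
  have h₀ := (Gamma_pos_of_pos hz).ne'
  have hb' := (Gamma_pos_of_pos (by linarith : 0 < z + b)).ne'
  have hc' := (Gamma_pos_of_pos (by linarith : 0 < z + c)).ne'
  have hbc' := (Gamma_pos_of_pos (by linarith : 0 < z + b + c)).ne'
  rw [gammaRatio, log_div (mul_ne_zero hb' hc') (mul_ne_zero h₀ hbc'), log_mul hb' hc',
    log_mul h₀ hbc']
  ring

theorem gammaRatio_le_one (hz : 0 < z) (hb : 0 ≤ b) (hc : 0 < c) : gammaRatio b c z ≤ 1 := by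
  have h := convexOn_log_Gamma.map_add_sub_map_le (x := z) (y := z + b) (d := c) hz
    (mem_Ioi.2 (by linarith)) (mem_Ioi.2 (by linarith)) (mem_Ioi.2 (by linarith)) (by linarith) hc
  simp only [Function.comp_apply] at h
  rw [← log_nonpos_iff (gammaRatio_pos hz hb hc.le).le, log_gammaRatio hz hb hc.le]
  linarith

theorem one_sub_gammaRatio_le (hz : 0 < z) (hb : 0 ≤ b) (hc : 0 < c) :
    1 - gammaRatio b c z ≤ c * (b + c + 1) / z := by
  have hR := log_le_sub_one_of_pos (gammaRatio_pos hz hb hc.le)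
  have hlog_sub : ∀ y, 0 < y → log y - log z ≤ (y - z) / z := fun y hy => by
    rw [← log_div hy.ne' hz.ne', sub_div, div_self hz.ne']
    exact log_le_sub_one_of_pos (by positivity)
  have hupper := log_Gamma_add_sub_le (by linarith : 0 < z + b) hc
  have hlower := mul_log_le_log_Gamma_add_sub hz hc
  rw [add_right_comm, log_Gamma_add_one (by linarith), log_Gamma_add_one hz] at hlower
  have h₁ := mul_le_mul_of_nonneg_left (hlog_sub (z + b + c) (by linarith)) hc.le
  have h₂ := hlog_sub (z + c) (by linarith)
  rw [log_gammaRatio hz hb hc.le] at hR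
  calc 1 - gammaRatio b c z ≤ c * ((z + b + c - z) / z) + (z + c - z) / z := by linarith
    _ = c * (b + c + 1) / z := by ring

end gammaRatio

theorem poch_eq_Gamma_div {a : ℝ} (ha : 0 < a) (k : ℕ) :
    poch a k = Gamma (a + k) / Gamma a := by
  induction k with
  | zero => simp [poch, (Gamma_pos_of_pos ha).ne']
  | succ k ih =>
    rw [poch, ascPochhammer_succ_right, Polynomial.eval_mul, ← poch, ih, Nat.cast_succ,
      ← add_assoc, Gamma_add_one (by positivity)]
    simp only [Polynomial.eval_add, Polynomial.eval_X, Polynomial.eval_natCast]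
    ring

theorem epsK_eq_mul_gammaRatio {p q β : ℝ} (hpq : 2 * β / p + 2 * β / q = 2 * β) (k : ℕ) :
    epsK p q β k = poch (2 * β / p) k / k ! *
      (gammaRatio (2 * β / q) (β - 2 * β / p) (k + 2 * β / p) - 1) := by
  rw [epsK, gammaRatio, show (k : ℝ) + 2 * β / p + 2 * β / q = k + 2 * β by linarith,
    show (k : ℝ) + 2 * β / p + (β - 2 * β / p) = k + β by ring,
    show (k : ℝ) + 2 * β + (β - 2 * β / p) = k + β + 2 * β / q by linarith]
  ring

theorem Gamma_nat_add_div_mul_one_sub_gammaRatio_le {a b c : ℝ} (ha : 0 < a) (hb : 0 ≤ b)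
    (hc : 0 < c) (k : ℕ) :
    Gamma (k + a) / Gamma a / k ! * (1 - gammaRatio b c (k + a)) ≤
      (1 + a) ^ a / min a 1 * (c * (b + c + 1) / min a 1) / Gamma a *
        ((k : ℝ) + 1) ^ (a - 1 - 1) := by
  have hk : (0 : ℝ) < k + 1 := by positivity
  have hz : 0 < k + a := by positivity
  calc Gamma (k + a) / Gamma a / k ! * (1 - gammaRatio b c (k + a))
      ≤ (1 + a) ^ a / min a 1 * ((k : ℝ) + 1) ^ (a - 1) / Gamma a *
          (c * (b + c + 1) / (min a 1 * (k + 1))) := by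
        have := Gamma_pos_of_pos ha
        rw [div_right_comm]
        gcongr
        · linarith [gammaRatio_le_one hz hb hc]
        · exact Gamma_nat_add_div_factorial_le ha k
        · exact (one_sub_gammaRatio_le hz hb hc).trans (div_le_div_of_nonneg_left (by positivity)
            (by positivity) (min_one_mul_add_one_le k.cast_nonneg))
    _ = _ := by
        rw [rpow_sub_one hk.ne' (a - 1), rpow_sub_one hk.ne' a]
        field_simp

theorem epsK_bound (p q α β : ℝ) (hp : 2 < p) (hq : q = p / (p - 1)) (hα : -1 < α)
    (hβ : β = (2 + α) / 2) :
    ∃ C : ℝ, 0 < C ∧ ∀ k : ℕ,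
      |epsK p q β k| ≤ C * ((k : ℝ) + 1) ^ (2 * β - 2 * β / q - 2) := by
  have hβ0 : 0 < β := by rw [hβ]; linarith
  have hpq : 2 * β / p + 2 * β / q = 2 * β := by
    rw [hq]
    field_simp [(by linarith : p - 1 ≠ 0)]
    ring
  simp_rw [epsK_eq_mul_gammaRatio hpq, show 2 * β - 2 * β / q - 2 = 2 * β / p - 1 - 1 by
    linarith]
  set a := 2 * β / p
  set b := 2 * β / q
  set c := β - a
  have ha : 0 < a := by positivity
  have hc : 0 < c := by
    rw [sub_pos, div_lt_iff₀ (by linarith)]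
    nlinarith
  have hb : 0 ≤ b := by linarith
  refine ⟨(1 + a) ^ a / min a 1 * (c * (b + c + 1) / min a 1) / Gamma a,
    by have := Gamma_pos_of_pos ha; positivity, fun k => ?_⟩
  have hz : 0 < k + a := by positivity
  rw [poch_eq_Gamma_div ha, add_comm a, abs_mul, abs_of_nonneg (by positivity),
    abs_of_nonpos (by linarith [gammaRatio_le_one hz hb hc]), neg_sub]
  exact Gamma_nat_add_div_mul_one_sub_gammaRatio_le ha hb hc k
end
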